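/- arXiv:1310.5242 — 7 statements merged into one kernel-verified Lean document; each statement's English description precedes it below -/
import Mathlib

section
/- Let A = (Q, A, δ) be a DFA. For every word w ∈ A*, there exists a unique maximal (with respect to inclusion) subset m(w) ⊆ Q with m(w)·w = m(w); moreover, m(w) = Q·w^k for some integer k with k ≤ |Q| − |m(w)|. -/
/-- The action of a DFA transition function on words. -/
def dfaRun {Q A : Type*} (δ : Q → A → Q) (q : Q) (u : List A) : Q := u.foldl δ q

/-- For every word `w` there is a unique maximal subset `m(w)` of states fixed by `w`;
moreover `m(w) = Q·w^k` for some `k ≤ |Q| - |m(w)|`. -/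
theorem stmt3 {Q A : Type*} [Fintype Q] [DecidableEq Q] (δ : Q → A → Q) (w : List A) :
    ∃! M : Finset Q,
      (M.image fun q => dfaRun δ q w) = M ∧
      (∀ S : Finset Q, (S.image fun q => dfaRun δ q w) = S → S ⊆ M) ∧
      ∃ k : ℕ, k ≤ Fintype.card Q - M.card ∧
        M = Finset.univ.image fun q => dfaRun δ q (List.flatten (List.replicate k w)) := by
  set f : Q → Q := fun q => dfaRun δ q w with hf
  have hrep : ∀ (k : ℕ) (q : Q),
      dfaRun δ q (List.flatten (List.replicate k w)) = f^[k] q := by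
    intro k
    induction k with
    | zero => intro q; rfl
    | succ n ih =>
      intro q
      rw [List.replicate_succ, List.flatten_cons]
      have : dfaRun δ q (w ++ List.flatten (List.replicate n w))
          = dfaRun δ (dfaRun δ q w) (List.flatten (List.replicate n w)) := by
        simp [dfaRun, List.foldl_append]
      rw [this, ih, Function.iterate_succ_apply]
  set h : ℕ → Finset Q := fun k => Finset.univ.image (f^[k]) with hh
  have hstep : ∀ k, h (k + 1) = (h k).image f := by
    intro k
    simp only [hh, Finset.image_image]
    rw [← Function.iterate_succ' f k]
  have hsub : ∀ k, h (k + 1) ⊆ h k := by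
    intro k x hx
    simp only [hh, Finset.mem_image, Finset.mem_univ, true_and] at hx ⊢
    obtain ⟨q, hq⟩ := hx
    exact ⟨f q, by rw [← Function.iterate_succ_apply]; exact hq⟩
  have claim : ∀ k, (∀ j < k, h (j + 1) ≠ h j) → (h k).card + k ≤ Fintype.card Q := by
    intro k
    induction k with
    | zero => intro _; simpa using Finset.card_le_univ (h 0)
    | succ n ih =>
      intro hyp
      have h1 : h (n + 1) ⊂ h n := (Finset.ssubset_iff_subset_ne).2
        ⟨hsub n, hyp n (Nat.lt_succ_self n)⟩
      have h2 : (h (n + 1)).card < (h n).card := Finset.card_lt_card h1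
      have h3 := ih (fun j hj => hyp j (hj.trans (Nat.lt_succ_self n)))
      omega
  have hex : ∃ k, h (k + 1) = h k := by
    by_contra hc
    push_neg at hc
    have := claim (Fintype.card Q + 1) (fun j _ => hc j)
    omega
  set k := Nat.find hex with hk
  have hfix : h (k + 1) = h k := Nat.find_spec hex
  have hmin : ∀ j < k, h (j + 1) ≠ h j := fun j hj => Nat.find_min hex hj
  have hcard : (h k).card + k ≤ Fintype.card Q := claim k hmin
  -- maximality helper
  have hmax : ∀ S : Finset Q, (S.image fun q => dfaRun δ q w) = S → S ⊆ h k := by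
    intro S hS
    have hiter : ∀ j, S.image (f^[j]) = S := by
      intro j
      induction j with
      | zero => simp
      | succ n ih =>
        rw [Function.iterate_succ' f n, ← Finset.image_image, ih]
        exact hS
    calc S = S.image (f^[k]) := (hiter k).symm
      _ ⊆ Finset.univ.image (f^[k]) :=
        Finset.image_subset_image (Finset.subset_univ S)
      _ = h k := rfl
  have hMfix : ((h k).image fun q => dfaRun δ q w) = h k := by
    rw [← hstep]; exact hfix
  refine ⟨h k, ⟨hMfix, hmax, k, by omega, ?_⟩, ?_⟩
  · ext q
    simp only [hh, Finset.mem_image, Finset.mem_univ, true_and]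
    constructor
    · rintro ⟨p, hp⟩; exact ⟨p, by rw [hrep]; exact hp⟩
    · rintro ⟨p, hp⟩; exact ⟨p, by rw [hrep] at hp; exact hp⟩
  · rintro M' ⟨h1', h2', -⟩
    exact Finset.Subset.antisymm (hmax M' h1') (h2' (h k) hMfix)
end

section
/- Let A = (Q, A, δ) be a synchronizing DFA such that |Q| is prime and there exists a subset B ⊆ A such that every letter of B acts as a permutation of Q and the monoid generated by B acts transitively on Q. Then A is simple, i.e., the only automata congruences on A are the identity relation and the universal relation. -/
/-!
The letters of `B` generate a group `G` of permutations of `Q` acting transitively, and a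
transitive action on a set of prime size is primitive. A congruence is compatible with the
generators, hence with all of the finite group `G`, so its classes are blocks of `G`; primitivity
makes each class a singleton or everything.
-/

open MulAction Pointwise

section Blocks

variable {X : Type*} {r : X → X → Prop}

theorem Equivalence.eq_or_forall_of_isTrivialBlock (hr : Equivalence r)
    (h : ∀ q, IsTrivialBlock {p | r p q}) : (∀ p q, r p q ↔ p = q) ∨ ∀ p q, r p q := by
  by_cases huniv : ∃ q, {p | r p q} = Set.univ
  · obtain ⟨q, hq⟩ := huniv
    have hrq : ∀ p, r p q := Set.eq_univ_iff_forall.mp hq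
    exact Or.inr fun p p' => hr.trans (hrq p) (hr.symm (hrq p'))
  · push Not at huniv
    refine Or.inl fun p q => ⟨fun hpq => ?_, fun h => h ▸ hr.refl p⟩
    exact ((h q).resolve_right (huniv q)) hpq (hr.refl q)

variable {G : Type*} [Group G] [MulAction G X]

theorem smul_setOf_rel (hG : ∀ (g : G) p q, r p q → r (g • p) (g • q)) (g : G) (q : X) :
    g • {p | r p q} = {p | r p (g • q)} := by
  ext x
  rw [Set.mem_smul_set_iff_inv_smul_mem, Set.mem_ofPred_eq, Set.mem_ofPred_eq]
  exact ⟨fun h => by simpa using hG g _ _ h, fun h => by simpa using hG g⁻¹ _ _ h⟩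

theorem isBlock_setOf_rel (hr : Equivalence r) (hG : ∀ (g : G) p q, r p q → r (g • p) (g • q))
    (q : X) : IsBlock G {p | r p q} := by
  intro g₁ g₂ hne
  rw [smul_setOf_rel hG, smul_setOf_rel hG] at hne ⊢
  refine Set.disjoint_left.mpr fun x h₁ h₂ => hne ?_
  ext y
  exact ⟨fun hy => hr.trans hy (hr.trans (hr.symm h₁) h₂),
    fun hy => hr.trans hy (hr.trans (hr.symm h₂) h₁)⟩

/-- Finiteness is what lets compatibility pass to inverses: `S` generates the same subgroup as
submonoid. -/
theorem rel_smul_of_mem_closure [Finite G] {S : Set G}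
    (hS : ∀ g ∈ S, ∀ p q, r p q → r (g • p) (g • q)) {g : G} (hg : g ∈ Subgroup.closure S) :
    ∀ p q, r p q → r (g • p) (g • q) := by
  rw [← Subgroup.mem_toSubmonoid, Subgroup.closure_toSubmonoid_of_finite] at hg
  induction hg using Submonoid.closure_induction with
  | mem g hg => exact hS g hg
  | one => simp
  | mul g h _ _ hg hh => exact fun p q hpq => by simpa [mul_smul] using hg _ _ (hh p q hpq)

end Blocks

section Dfa

variable {Q A : Type*} {δ : Q → A → Q} {B : Set A}

def letterPerms (δ : Q → A → Q) (B : Set A) : Set (Equiv.Perm Q) :=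
  {σ | ∃ b ∈ B, ⇑σ = fun q => δ q b}

theorem exists_mem_closure_letterPerms_eq_dfaRun
    (hperm : ∀ b ∈ B, Function.Bijective fun q => δ q b) (u : List A) (hu : ∀ a ∈ u, a ∈ B) :
    ∃ σ ∈ Subgroup.closure (letterPerms δ B), ∀ q, σ q = dfaRun δ q u := by
  induction u with
  | nil => exact ⟨1, one_mem _, fun q => rfl⟩
  | cons a u ih =>
    obtain ⟨σ, hσ, hσu⟩ := ih fun x hx => hu x (List.mem_cons_of_mem a hx)
    have ha := hu a List.mem_cons_self
    refine ⟨σ * Equiv.ofBijective _ (hperm a ha),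
      mul_mem hσ (Subgroup.subset_closure ⟨a, ha, rfl⟩), fun q => hσu _⟩

theorem isPretransitive_closure_letterPerms
    (hperm : ∀ b ∈ B, Function.Bijective fun q => δ q b)
    (htrans : ∀ p q : Q, ∃ u : List A, (∀ a ∈ u, a ∈ B) ∧ dfaRun δ p u = q) :
    IsPretransitive (Subgroup.closure (letterPerms δ B)) Q where
  exists_smul_eq p q := by
    obtain ⟨u, hu, rfl⟩ := htrans p q
    obtain ⟨σ, hσ, hσu⟩ := exists_mem_closure_letterPerms_eq_dfaRun hperm u hu
    exact ⟨⟨σ, hσ⟩, hσu p⟩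

end Dfa

theorem stmt4_general {Q A : Type*} [Fintype Q] (δ : Q → A → Q)
    (hprime : Nat.Prime (Fintype.card Q))
    (B : Set A)
    (hperm : ∀ b ∈ B, Function.Bijective fun q => δ q b)
    (htrans : ∀ p q : Q, ∃ u : List A, (∀ a ∈ u, a ∈ B) ∧ dfaRun δ p u = q) :
    ∀ r : Q → Q → Prop, Equivalence r → (∀ p q, r p q → ∀ a, r (δ p a) (δ q a)) →
      (∀ p q, r p q ↔ p = q) ∨ (∀ p q, r p q) := by
  intro r hr hcong
  have := isPretransitive_closure_letterPerms hperm htrans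
  have hprim : IsPreprimitive (Subgroup.closure (letterPerms δ B)) Q :=
    .of_prime_card (by rwa [Nat.card_eq_fintype_card])
  have hletter : ∀ σ ∈ letterPerms δ B, ∀ p q, r p q → r (σ • p) (σ • q) := by
    rintro σ ⟨b, -, hσ⟩ p q hpq
    simpa [Equiv.Perm.smul_def, hσ] using hcong p q hpq b
  refine hr.eq_or_forall_of_isTrivialBlock fun q =>
    hprim.isTrivialBlock_of_isBlock (isBlock_setOf_rel hr ?_ q)
  exact fun σ => rel_smul_of_mem_closure hletter σ.2

/-- A synchronizing DFA with a prime number of states, on which a subset `B` of letters acts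
by permutations and transitively, is simple: its only automata congruences are the identity
relation and the universal relation. -/
theorem stmt4 {Q A : Type*} [Fintype Q] [DecidableEq Q] (δ : Q → A → Q)
    (hsync : ∃ u : List A, (Finset.univ.image fun q => dfaRun δ q u).card = 1)
    (hprime : Nat.Prime (Fintype.card Q))
    (B : Set A)
    (hperm : ∀ b ∈ B, Function.Bijective fun q => δ q b)
    (htrans : ∀ p q : Q, ∃ u : List A, (∀ a ∈ u, a ∈ B) ∧ dfaRun δ p u = q) :
    ∀ r : Q → Q → Prop, Equivalence r → (∀ p q, r p q → ∀ a, r (δ p a) (δ q a)) →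
      (∀ p q, r p q ↔ p = q) ∨ (∀ p q, r p q) :=
  stmt4_general δ hprime B hperm htrans
end

section
/- Let A = (Q, A, δ) be a bounded DFA (a DFA with unique sink s such that only finitely many right-infinite words label paths avoiding the sink from some state) with |A| > 1. Then A is synchronizing. -/
theorem dfaRun_append {Q A : Type*} (δ : Q → A → Q) (q : Q) (u v : List A) :
    dfaRun δ q (u ++ v) = dfaRun δ (dfaRun δ q u) v := by
  simp [dfaRun, List.foldl_append]

theorem dfaRun_sink {Q A : Type*} (δ : Q → A → Q) (s : Q) (hsink : ∀ a, δ s a = s)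
    (u : List A) : dfaRun δ s u = s := by
  induction u with
  | nil => rfl
  | cons a u ih => simpa [dfaRun, hsink] using ih

/-- A bounded DFA (unique sink `s`, finitely many right-infinite paths avoiding the sink)
over an alphabet with more than one letter is synchronizing. -/
theorem stmt5 {Q A : Type*} [Fintype Q] [DecidableEq Q] [Fintype A] (δ : Q → A → Q) (s : Q)
    (hsink : ∀ a, δ s a = s)
    (huniq : ∀ s' : Q, (∀ a, δ s' a = s') → s' = s)
    (hbounded : {p : Q × (ℕ → A) |
      ∀ i : ℕ, dfaRun δ p.1 ((List.range i).map p.2) ≠ s}.Finite)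
    (hA : 1 < Fintype.card A) :
    ∃ u : List A, (Finset.univ.image fun q => dfaRun δ q u).card = 1 := by
  have hnt : Nontrivial A := Fintype.one_lt_card_iff_nontrivial.mp hA
  have hinf : Infinite (ℕ → A) := by
    obtain ⟨a, b, hab⟩ := hnt
    exact Infinite.of_injective (fun n => fun i => if i = n then a else b)
      (by
        intro m n hmn
        by_contra h
        have := congrFun hmn m
        simp [h] at this
        exact hab this)
  -- every state reaches the sink
  have hreach : ∀ q : Q, ∃ u : List A, dfaRun δ q u = s := by
    intro q
    by_contra h
    push_neg at h
    have : {p : Q × (ℕ → A) |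
        ∀ i : ℕ, dfaRun δ p.1 ((List.range i).map p.2) ≠ s}.Infinite := by
      apply Set.infinite_of_injective_forall_mem
        (f := fun f : ℕ → A => ((q, f) : Q × (ℕ → A)))
      · intro f g hfg
        simpa using congrArg Prod.snd hfg
      · intro f i
        exact h _
    exact this hbounded
  -- build a word sending every state in a finset to s
  have key : ∀ S : Finset Q, ∃ u : List A, ∀ q ∈ S, dfaRun δ q u = s := by
    intro S
    induction S using Finset.induction_on with
    | empty => exact ⟨[], by simp⟩
    | @insert q S' hq ih =>
      obtain ⟨u, hu⟩ := ih
      obtain ⟨v, hv⟩ := hreach (dfaRun δ q u)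
      refine ⟨u ++ v, ?_⟩
      intro r hr
      rcases Finset.mem_insert.mp hr with rfl | hr
      · rw [dfaRun_append, hv]
      · rw [dfaRun_append, hu r hr, dfaRun_sink δ s hsink]
  obtain ⟨u, hu⟩ := key Finset.univ
  refine ⟨u, ?_⟩
  have : (Finset.univ.image fun q => dfaRun δ q u) = {s} := by
    apply Finset.eq_singleton_iff_unique_mem.mpr
    constructor
    · exact Finset.mem_image.mpr ⟨s, Finset.mem_univ s, dfaRun_sink δ s hsink u⟩
    · intro x hx
      obtain ⟨q, -, rfl⟩ := Finset.mem_image.mp hx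
      exact hu q (Finset.mem_univ q)
  rw [this, Finset.card_singleton]
end

section
/- Let A be a simple synchronizing DFA and 𝒜 = M(A, χ) the invertible reset Mealy automaton obtained from a reset group coloring χ. Then the relation σ on Q defined by p σ q iff the modified state functions λ̃_p and λ̃_q are equal is an automata congruence; consequently either all modified state functions are distinct (and S(𝒜) is free) or all modified state functions are equal (𝒜 is singular). -/
/-- The sequential transformation of `A*` induced by a state of a Mealy automaton. -/
def mealyMap {Q A : Type*} (δ : Q → A → Q) (lam : Q → A → A) : Q → List A → List A
  | _, [] => []
  | q, a :: u => lam q a :: mealyMap δ lam (δ q a) u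

/-- The set of synchronizing (reset) words of the underlying DFA. -/
def synSet {Q A : Type*} [Fintype Q] [DecidableEq Q] (δ : Q → A → Q) : Set (List A) :=
  {u | (Finset.univ.image fun q => dfaRun δ q u).card = 1}

/-- Equality of the modified state functions `λ̃_p = λ̃_q`: for every reset word `u`,
`Q·(p∘u)` and `Q·(q∘u)` are the same (singleton) set. -/
def mfEq {Q A : Type*} [Fintype Q] [DecidableEq Q]
    (δ : Q → A → Q) (lam : Q → A → A) (p q : Q) : Prop :=
  ∀ u ∈ synSet δ, ∀ r : Q, dfaRun δ r (mealyMap δ lam p u) = dfaRun δ r (mealyMap δ lam q u)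

set_option linter.unusedSectionVars false
set_option maxHeartbeats 1000000

namespace Stmt10Aux

variable {Q A : Type*} [Fintype Q] [DecidableEq Q] [Fintype A]
variable (δ : Q → A → Q) (lam : Q → A → A)

theorem dfaRun_cons (q : Q) (a : A) (u : List A) :
    dfaRun δ q (a :: u) = dfaRun δ (δ q a) u := rfl

theorem mealy_nil (q : Q) : mealyMap δ lam q [] = [] := rfl

theorem mealy_cons (q : Q) (a : A) (u : List A) :
    mealyMap δ lam q (a :: u) = lam q a :: mealyMap δ lam (δ q a) u := rfl

theorem mealy_length (u : List A) : ∀ q : Q, (mealyMap δ lam q u).length = u.length := by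
  induction u with
  | nil => intro q; rfl
  | cons a u ih => intro q; simp [mealy_cons, ih]

theorem mealy_append (u : List A) : ∀ (q : Q) (v : List A),
    mealyMap δ lam q (u ++ v) = mealyMap δ lam q u ++ mealyMap δ lam (dfaRun δ q u) v := by
  induction u with
  | nil => intro q v; rfl
  | cons a u ih => intro q v; simp [mealy_cons, dfaRun_cons, ih]

theorem mealy_inj (hinv : ∀ q, Function.Bijective (lam q)) :
    ∀ (u : List A) (q : Q) (v : List A), mealyMap δ lam q u = mealyMap δ lam q v → u = v := by
  intro u
  induction u with
  | nil =>
    intro q v h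
    cases v with
    | nil => rfl
    | cons b v => simp [mealy_nil, mealy_cons] at h
  | cons a u ih =>
    intro q v h
    cases v with
    | nil => simp [mealy_nil, mealy_cons] at h
    | cons b v =>
      rw [mealy_cons, mealy_cons, List.cons.injEq] at h
      obtain ⟨h1, h2⟩ := h
      have hab : a = b := (hinv q).1 h1
      subst hab
      rw [ih (δ q a) v h2]

theorem mealy_surj (hinv : ∀ q, Function.Bijective (lam q)) :
    ∀ (v : List A) (q : Q), ∃ u, mealyMap δ lam q u = v := by
  intro v
  induction v with
  | nil => intro q; exact ⟨[], rfl⟩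
  | cons b v ih =>
    intro q
    obtain ⟨a, ha⟩ := (hinv q).2 b
    obtain ⟨u, hu⟩ := ih (δ q a)
    exact ⟨a :: u, by rw [mealy_cons, ha, hu]⟩

theorem synRun {u : List A} (hu : u ∈ synSet δ) (r s : Q) :
    dfaRun δ r u = dfaRun δ s u := by
  obtain ⟨x, hx⟩ := Finset.card_eq_one.mp hu
  have h1 : dfaRun δ r u ∈ Finset.univ.image fun q => dfaRun δ q u :=
    Finset.mem_image_of_mem _ (Finset.mem_univ r)
  have h2 : dfaRun δ s u ∈ Finset.univ.image fun q => dfaRun δ q u :=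
    Finset.mem_image_of_mem _ (Finset.mem_univ s)
  rw [hx, Finset.mem_singleton] at h1 h2
  rw [h1, h2]

theorem syn_nonempty {u : List A} (hu : u ∈ synSet δ) : Nonempty Q := by
  obtain ⟨x, hx⟩ := Finset.card_eq_one.mp hu
  have : x ∈ Finset.univ.image fun q => dfaRun δ q u := by
    rw [hx]; exact Finset.mem_singleton_self x
  obtain ⟨q, -, -⟩ := Finset.mem_image.mp this
  exact ⟨q⟩

theorem syn_of_run (hQ : Nonempty Q) {u : List A}
    (h : ∀ r s : Q, dfaRun δ r u = dfaRun δ s u) : u ∈ synSet δ := by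
  obtain ⟨q₀⟩ := hQ
  have himg : (Finset.univ.image fun q => dfaRun δ q u) = {dfaRun δ q₀ u} := by
    apply Finset.eq_singleton_iff_unique_mem.mpr
    refine ⟨Finset.mem_image_of_mem _ (Finset.mem_univ q₀), ?_⟩
    intro x hx
    obtain ⟨q, -, rfl⟩ := Finset.mem_image.mp hx
    exact h q q₀
  show (Finset.univ.image fun q => dfaRun δ q u).card = 1
  rw [himg, Finset.card_singleton]

theorem syn_cons {u : List A} (hu : u ∈ synSet δ) (a : A) : (a :: u) ∈ synSet δ := by
  refine syn_of_run δ (syn_nonempty δ hu) ?_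
  intro r s
  rw [dfaRun_cons, dfaRun_cons]
  exact synRun δ hu _ _

/-- Composite of a list of Mealy transformations, head outermost. -/
def compFn : List Q → List A → List A
  | [], u => u
  | q :: t, u => mealyMap δ lam q (compFn t u)

/-- Cross-section (state list) of a tuple of states after reading input `u`. -/
def cs : List Q → List A → List Q
  | [], _ => []
  | q :: t, u => dfaRun δ q (compFn δ lam t u) :: cs t u

theorem compFn_nil (u : List A) : compFn δ lam [] u = u := rfl

theorem compFn_cons (q : Q) (t : List Q) (u : List A) :
    compFn δ lam (q :: t) u = mealyMap δ lam q (compFn δ lam t u) := rfl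

theorem compFn_concat (t : List Q) (q : Q) (u : List A) :
    compFn δ lam (t ++ [q]) u = compFn δ lam t (mealyMap δ lam q u) := by
  induction t with
  | nil => rfl
  | cons p t ih => simp [compFn_cons, ih]

theorem compFn_length (t : List Q) (u : List A) :
    (compFn δ lam t u).length = u.length := by
  induction t with
  | nil => rfl
  | cons q t ih => rw [compFn_cons, mealy_length δ lam, ih]

theorem compFn_syn (hreset : ∀ q : Q, ∀ u ∈ synSet δ, mealyMap δ lam q u ∈ synSet δ)
    (t : List Q) {u : List A} (hu : u ∈ synSet δ) : compFn δ lam t u ∈ synSet δ := by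
  induction t with
  | nil => exact hu
  | cons q t ih => exact hreset q _ ih

theorem compFn_inj (hinv : ∀ q, Function.Bijective (lam q)) (t : List Q) {u v : List A}
    (h : compFn δ lam t u = compFn δ lam t v) : u = v := by
  induction t with
  | nil => exact h
  | cons q t ih => exact ih (mealy_inj δ lam hinv _ q _ h)

theorem compFn_surj (hinv : ∀ q, Function.Bijective (lam q)) (t : List Q) (w : List A) :
    ∃ v, compFn δ lam t v = w := by
  induction t generalizing w with
  | nil => exact ⟨w, rfl⟩
  | cons q t ih =>
    obtain ⟨x, hx⟩ := mealy_surj δ lam hinv w q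
    obtain ⟨v, hv⟩ := ih x
    exact ⟨v, by rw [compFn_cons, hv, hx]⟩

theorem cs_nil (u : List A) : cs δ lam [] u = [] := rfl

theorem cs_cons (q : Q) (t : List Q) (u : List A) :
    cs δ lam (q :: t) u = dfaRun δ q (compFn δ lam t u) :: cs δ lam t u := rfl

theorem cs_length (l : List Q) (u : List A) : (cs δ lam l u).length = l.length := by
  induction l with
  | nil => rfl
  | cons q t ih => rw [cs_cons]; simp [ih]

theorem cs_drop (l : List Q) (u : List A) : ∀ d, (cs δ lam l u).drop d = cs δ lam (l.drop d) u := by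
  induction l with
  | nil => intro d; simp [cs_nil]
  | cons q t ih =>
    intro d
    cases d with
    | zero => simp
    | succ d => rw [cs_cons, List.drop_succ_cons, List.drop_succ_cons, ih]

theorem cs_concat (t : List Q) (q : Q) (u : List A) :
    cs δ lam (t ++ [q]) u = cs δ lam t (mealyMap δ lam q u) ++ [dfaRun δ q u] := by
  induction t with
  | nil => rfl
  | cons p t ih =>
    simp only [List.cons_append, cs_cons, ih, compFn_concat]

theorem compFn_split (l : List Q) (u v : List A) :
    compFn δ lam l (u ++ v) = compFn δ lam l u ++ compFn δ lam (cs δ lam l u) v := by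
  induction l with
  | nil => rfl
  | cons q t ih =>
    rw [compFn_cons, ih, mealy_append δ lam, cs_cons, compFn_cons]
    rfl

theorem cs_cross {l l' : List Q} (h : ∀ w, compFn δ lam l w = compFn δ lam l' w)
    (u v : List A) :
    compFn δ lam (cs δ lam l u) v = compFn δ lam (cs δ lam l' u) v := by
  have h1 := compFn_split δ lam l u v
  have h2 := compFn_split δ lam l' u v
  rw [h (u ++ v), h u] at h1
  rw [h1] at h2
  exact (List.append_cancel_left h2.symm).symm

theorem cancel_concat (hinv : ∀ q, Function.Bijective (lam q)) {t t' : List Q} {q : Q}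
    (h : ∀ w, compFn δ lam (t ++ [q]) w = compFn δ lam (t' ++ [q]) w) :
    ∀ w, compFn δ lam t w = compFn δ lam t' w := by
  intro w
  obtain ⟨v, hv⟩ := mealy_surj δ lam hinv w q
  have := h v
  rw [compFn_concat, compFn_concat, hv] at this
  exact this

theorem compFn_syn_surj (hinv : ∀ q, Function.Bijective (lam q))
    (hreset : ∀ q : Q, ∀ u ∈ synSet δ, mealyMap δ lam q u ∈ synSet δ)
    (t : List Q) {w : List A} (hw : w ∈ synSet δ) :
    ∃ v ∈ synSet δ, compFn δ lam t v = w := by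
  classical
  set S : Set (List A) := {v | v ∈ synSet δ ∧ v.length = w.length} with hSdef
  have hS : S.Finite := (List.finite_length_eq A w.length).subset fun v hv => hv.2
  have hmaps : Set.MapsTo (compFn δ lam t) S S := by
    intro v hv
    exact ⟨compFn_syn δ lam hreset t hv.1, by rw [compFn_length δ lam]; exact hv.2⟩
  have hinj : Set.InjOn (compFn δ lam t) S := fun a _ b _ h => compFn_inj δ lam hinv t h
  have hbij := (Set.Finite.injOn_iff_bijOn_of_mapsTo hS hmaps).mp hinj
  obtain ⟨v, hv, hveq⟩ := hbij.surjOn ⟨hw, rfl⟩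
  exact ⟨v, hv.1, hveq⟩

noncomputable def sfx (q₀ : Q) : List (List A) → List Q
  | [] => []
  | v :: r => dfaRun δ q₀ (compFn δ lam (sfx q₀ r) v) :: cs δ lam (sfx q₀ r) v

noncomputable def iter (L : List Q) : List (List A) → List Q
  | [] => L
  | v :: r => cs δ lam (iter L r) v

theorem sfx_nil (q₀ : Q) : sfx δ lam q₀ [] = [] := rfl

theorem sfx_cons (q₀ : Q) (v : List A) (r : List (List A)) :
    sfx δ lam q₀ (v :: r)
      = dfaRun δ q₀ (compFn δ lam (sfx δ lam q₀ r) v) :: cs δ lam (sfx δ lam q₀ r) v := rfl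

theorem iter_nil (L : List Q) : iter δ lam L [] = L := rfl

theorem iter_cons (L : List Q) (v : List A) (r : List (List A)) :
    iter δ lam L (v :: r) = cs δ lam (iter δ lam L r) v := rfl

theorem iter_length (L : List Q) : ∀ r, (iter δ lam L r).length = L.length := by
  intro r
  induction r with
  | nil => rfl
  | cons v r ih => rw [iter_cons, cs_length, ih]

theorem iter_id {L : List Q} (hid : ∀ w, compFn δ lam L w = w) :
    ∀ (r : List (List A)) (w : List A), compFn δ lam (iter δ lam L r) w = w := by
  intro r
  induction r with
  | nil => exact hid
  | cons v r ih =>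
    intro w
    have h := cs_cross δ lam (l := iter δ lam L r) (l' := [])
      (fun x => by rw [ih x, compFn_nil]) v w
    rw [iter_cons, h, cs_nil, compFn_nil]

theorem sfx_drop (q₀ : Q) (hreset : ∀ q : Q, ∀ u ∈ synSet δ, mealyMap δ lam q u ∈ synSet δ) :
    ∀ (r : List (List A)) (v : List A), v ∈ synSet δ → (∀ w ∈ r, w ∈ synSet δ) →
      cs δ lam (sfx δ lam q₀ r) v = sfx δ lam q₀ ((v :: r).dropLast) := by
  intro r
  induction r with
  | nil => intro v _ _; rw [sfx_nil, cs_nil]; rfl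
  | cons w r' ih =>
    intro v hv hall
    have hw : w ∈ synSet δ := hall w (by simp)
    have hr' : ∀ x ∈ r', x ∈ synSet δ := fun x hx => hall x (by simp [hx])
    have key : cs δ lam (sfx δ lam q₀ r') w = sfx δ lam q₀ ((w :: r').dropLast) := ih w hw hr'
    rw [sfx_cons, cs_cons, key]
    have hdl : (v :: w :: r').dropLast = v :: ((w :: r').dropLast) := by
      simp [List.dropLast_cons₂]
    rw [hdl, sfx_cons]
    have hsynarg : compFn δ lam (sfx δ lam q₀ ((w :: r').dropLast)) v ∈ synSet δ :=
      compFn_syn δ lam hreset _ hv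
    rw [synRun δ hsynarg _ q₀]

theorem iter_sfx (q₀ : Q) (hreset : ∀ q : Q, ∀ u ∈ synSet δ, mealyMap δ lam q u ∈ synSet δ) :
    ∀ (r : List (List A)), (∀ w ∈ r, w ∈ synSet δ) → ∀ (L : List Q), r.length ≤ L.length →
      (iter δ lam L r).drop (L.length - r.length) = sfx δ lam q₀ r := by
  intro r
  induction r with
  | nil => intro _ L _; simp [iter_nil, sfx_nil, List.drop_length]
  | cons v r ih =>
    intro hall L hlen
    have hv : v ∈ synSet δ := hall v (by simp)
    have hr : ∀ w ∈ r, w ∈ synSet δ := fun x hx => hall x (by simp [hx])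
    have hXlen : (iter δ lam L r).length = L.length := iter_length δ lam L r
    have hlc : (v :: r).length = r.length + 1 := by simp
    rw [hlc] at hlen ⊢
    have hlen' : r.length ≤ L.length := by omega
    have hd : L.length - (r.length + 1) < (iter δ lam L r).length := by
      rw [hXlen]; omega
    rw [iter_cons, cs_drop, List.drop_eq_getElem_cons hd]
    have harith : L.length - (r.length + 1) + 1 = L.length - r.length := by omega
    rw [harith, ih hr L hlen']
    rw [cs_cons, sfx_cons]
    have hsynarg : compFn δ lam (sfx δ lam q₀ r) v ∈ synSet δ :=
      compFn_syn δ lam hreset _ hv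
    rw [synRun δ hsynarg _ q₀]

theorem sfx_id (q₀ : Q) (hreset : ∀ q : Q, ∀ u ∈ synSet δ, mealyMap δ lam q u ∈ synSet δ)
    {M : List Q} (hid : ∀ w, compFn δ lam M w = w)
    (r : List (List A)) (hall : ∀ w ∈ r, w ∈ synSet δ) (hlen : r.length = M.length) :
    ∀ w, compFn δ lam (sfx δ lam q₀ r) w = w := by
  have h1 := iter_sfx δ lam q₀ hreset r hall M (le_of_eq hlen)
  rw [hlen, Nat.sub_self, List.drop_zero] at h1
  intro w
  rw [← h1]
  exact iter_id δ lam hid r w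

theorem mfEq_of_fun_eq {p q : Q} (h : ∀ u, mealyMap δ lam p u = mealyMap δ lam q u) :
    mfEq δ lam p q := fun u _ r => by rw [h u]

theorem no_id_word
    (hinv : ∀ q, Function.Bijective (lam q))
    (hreset : ∀ q : Q, ∀ u ∈ synSet δ, mealyMap δ lam q u ∈ synSet δ)
    (H : ∀ p q : Q, mfEq δ lam p q → p = q)
    {p₀ q₀ : Q} (hne : p₀ ≠ q₀) :
    ∀ (M : List Q), (∀ w, compFn δ lam M w = w) → M = [] := by
  intro M hid
  by_contra hM
  have hn1 : 1 ≤ M.length := by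
    cases M with
    | nil => exact absurd rfl hM
    | cons a t => simp
  -- main claim: the synchronizing state is unique
  have hC : ∀ w ∈ synSet δ, ∀ w' ∈ synSet δ, dfaRun δ p₀ w = dfaRun δ p₀ w' := by
    rcases Nat.lt_or_ge M.length 2 with h2 | h2
    · -- n = 1
      have hn : M.length = 1 := by omega
      intro w hw w' hw'
      have key : ∀ x, x ∈ synSet δ → ∀ u, mealyMap δ lam (dfaRun δ p₀ x) u = u := by
        intro x hx u
        have hs := sfx_id δ lam p₀ hreset hid [x] (by simpa using hx) (by simpa using hn.symm) u
        rw [sfx_cons, sfx_nil, cs_nil, compFn_nil, compFn_cons, compFn_nil] at hs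
        exact hs
      refine H _ _ (mfEq_of_fun_eq δ lam ?_)
      intro u
      rw [key w hw u, key w' hw' u]
    · -- n ≥ 2
      set n := M.length with hnn
      -- the independence predicate
      let Pind : ℕ → Prop := fun k => ∀ (r' : List (List A)) (v w w' : List A),
        r'.length = k → (∀ x ∈ r', x ∈ synSet δ) → v ∈ synSet δ → w ∈ synSet δ →
        w' ∈ synSet δ →
        dfaRun δ p₀ (compFn δ lam (sfx δ lam p₀ (r' ++ [w])) v)
          = dfaRun δ p₀ (compFn δ lam (sfx δ lam p₀ (r' ++ [w'])) v)
      -- key expansion: for any v, r', w (all reset words),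
      -- sfx (v :: (r' ++ [w])) = α(w) :: sfx (v :: r')
      have hexp : ∀ (r' : List (List A)) (v w : List A), v ∈ synSet δ → w ∈ synSet δ →
          (∀ x ∈ r', x ∈ synSet δ) →
          sfx δ lam p₀ (v :: (r' ++ [w]))
            = dfaRun δ p₀ (compFn δ lam (sfx δ lam p₀ (r' ++ [w])) v)
                :: sfx δ lam p₀ (v :: r') := by
        intro r' v w hv hw hall
        rw [sfx_cons]
        congr 1
        have hall2 : ∀ x ∈ r' ++ [w], x ∈ synSet δ := by
          intro x hx
          rcases List.mem_append.mp hx with h | h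
          · exact hall x h
          · rw [List.mem_singleton.mp h]; exact hw
        rw [sfx_drop δ lam p₀ hreset (r' ++ [w]) v hv hall2]
        congr 1
        rw [show v :: (r' ++ [w]) = (v :: r') ++ [w] from rfl, List.dropLast_concat]
      have top : Pind (n - 2) := by
        intro r' v w w' hlen hall hv hw hw'
        have hall2 : ∀ x ∈ r' ++ [w], x ∈ synSet δ := by
          intro x hx
          rcases List.mem_append.mp hx with h | h
          · exact hall x h
          · rw [List.mem_singleton.mp h]; exact hw
        have hall2' : ∀ x ∈ r' ++ [w'], x ∈ synSet δ := by
          intro x hx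
          rcases List.mem_append.mp hx with h | h
          · exact hall x h
          · rw [List.mem_singleton.mp h]; exact hw'
        have hallv : ∀ x ∈ v :: (r' ++ [w]), x ∈ synSet δ := by
          intro x hx
          rcases List.mem_cons.mp hx with h | h
          · rw [h]; exact hv
          · exact hall2 x h
        have hallv' : ∀ x ∈ v :: (r' ++ [w']), x ∈ synSet δ := by
          intro x hx
          rcases List.mem_cons.mp hx with h | h
          · rw [h]; exact hv
          · exact hall2' x h
        have hlenv : (v :: (r' ++ [w])).length = M.length := by
          simp [hlen]; omega
        have hlenv' : (v :: (r' ++ [w'])).length = M.length := by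
          simp [hlen]; omega
        have hs := sfx_id δ lam p₀ hreset hid _ hallv hlenv
        have hs' := sfx_id δ lam p₀ hreset hid _ hallv' hlenv'
        rw [hexp r' v w hv hw hall] at hs
        rw [hexp r' v w' hv hw' hall] at hs'
        -- hs : ∀ u, compFn (α :: sfx (v :: r')) u = u
        refine H _ _ (mfEq_of_fun_eq δ lam ?_)
        intro u
        obtain ⟨x, hx⟩ := compFn_surj δ lam hinv (sfx δ lam p₀ (v :: r')) u
        have h1 := hs x
        have h2 := hs' x
        rw [compFn_cons, hx] at h1 h2
        rw [h1, h2]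
      have step : ∀ k, Pind (k + 1) → Pind k := by
        intro k hP r'' v₂ w w' hlen hall hv₂ hw hw'
        refine H _ _ ?_
        intro u hu r
        obtain ⟨v, hvSyn, hveq⟩ :=
          compFn_syn_surj δ lam hinv hreset (sfx δ lam p₀ (v₂ :: r'')) hu
        have hallv : ∀ x ∈ v₂ :: r'', x ∈ synSet δ := by
          intro x hx
          rcases List.mem_cons.mp hx with h | h
          · rw [h]; exact hv₂
          · exact hall x h
        have h := hP (v₂ :: r'') v w w' (by simp [hlen]) hallv hvSyn hw hw'
        rw [show (v₂ :: r'') ++ [w] = v₂ :: (r'' ++ [w]) from rfl,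
            show (v₂ :: r'') ++ [w'] = v₂ :: (r'' ++ [w']) from rfl,
            hexp r'' v₂ w hv₂ hw hall, hexp r'' v₂ w' hv₂ hw' hall,
            compFn_cons, compFn_cons, hveq] at h
        have hsyn1 : mealyMap δ lam
            (dfaRun δ p₀ (compFn δ lam (sfx δ lam p₀ (r'' ++ [w])) v₂)) u ∈ synSet δ :=
          hreset _ u hu
        have hsyn2 : mealyMap δ lam
            (dfaRun δ p₀ (compFn δ lam (sfx δ lam p₀ (r'' ++ [w'])) v₂)) u ∈ synSet δ :=
          hreset _ u hu
        rw [synRun δ hsyn1 r p₀, synRun δ hsyn2 r p₀]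
        exact h
      have chain : ∀ k, Pind k → Pind 0 := by
        intro k
        induction k with
        | zero => exact id
        | succ k ih => intro h; exact ih (step k h)
      have hP0 : Pind 0 := chain (n - 2) top
      intro w hw w' hw'
      have key : ∀ u, u ∈ synSet δ →
          dfaRun δ p₀ (mealyMap δ lam (dfaRun δ p₀ w) u)
            = dfaRun δ p₀ (mealyMap δ lam (dfaRun δ p₀ w') u) := by
        intro u hu
        have h := hP0 [] u w w' rfl (by simp) hu hw hw'
        simp only [List.nil_append, sfx_cons, sfx_nil, cs_nil, compFn_nil, compFn_cons] at h
        exact h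
      refine H _ _ ?_
      intro u hu r
      rw [synRun δ (hreset (dfaRun δ p₀ w) u hu) r p₀,
          synRun δ (hreset (dfaRun δ p₀ w') u hu) r p₀]
      exact key u hu
  -- conclusion: all states are mfEq-equivalent, contradicting hne
  apply hne
  refine H _ _ ?_
  intro u hu r
  have h1 : mealyMap δ lam p₀ u ∈ synSet δ := hreset p₀ u hu
  have h2 : mealyMap δ lam q₀ u ∈ synSet δ := hreset q₀ u hu
  rw [synRun δ h1 r p₀, synRun δ h2 r p₀]
  exact hC _ h1 _ h2

section Main

variable (hinv : ∀ q, Function.Bijective (lam q))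
variable (hreset : ∀ q : Q, ∀ u ∈ synSet δ, mealyMap δ lam q u ∈ synSet δ)
variable (hsync : (synSet δ).Nonempty)
variable (H : ∀ p q : Q, mfEq δ lam p q → p = q)
variable {p₀ q₀ : Q} (hne : p₀ ≠ q₀)

include hinv hreset hsync H hne

theorem len_eq :
    ∀ (n : ℕ) (l l' : List Q), l.length ≤ n →
      (∀ w, compFn δ lam l w = compFn δ lam l' w) → l.length = l'.length := by
  intro n
  induction n with
  | zero =>
    intro l l' hl h
    have hl0 : l = [] := List.length_eq_zero_iff.mp (Nat.le_zero.mp hl)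
    subst hl0
    have : l' = [] := no_id_word δ lam hinv hreset H hne l'
      (fun w => by rw [← h w, compFn_nil])
    rw [this]
  | succ n ih =>
    intro l l' hl h
    rcases List.eq_nil_or_concat' l with rfl | ⟨y, q, rfl⟩
    · have : l' = [] := no_id_word δ lam hinv hreset H hne l'
        (fun w => by rw [← h w, compFn_nil])
      rw [this]
    rcases List.eq_nil_or_concat' l' with rfl | ⟨y', p, rfl⟩
    · have : y ++ [q] = [] := no_id_word δ lam hinv hreset H hne _
        (fun w => by rw [h w, compFn_nil])
      simp at this
    obtain ⟨u₀, hu₀⟩ := hsync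
    have hqp : dfaRun δ q u₀ = dfaRun δ p u₀ := synRun δ hu₀ _ _
    have hcross : ∀ v, compFn δ lam (cs δ lam y (mealyMap δ lam q u₀) ++ [dfaRun δ p u₀]) v
        = compFn δ lam (cs δ lam y' (mealyMap δ lam p u₀) ++ [dfaRun δ p u₀]) v := by
      intro v
      have h1 := cs_cross δ lam h u₀ v
      rw [cs_concat, cs_concat, hqp] at h1
      exact h1
    have hcancel := cancel_concat δ lam hinv hcross
    have hy : (cs δ lam y (mealyMap δ lam q u₀)).length ≤ n := by
      rw [cs_length]
      simp at hl; omega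
    have := ih _ _ hy hcancel
    rw [cs_length, cs_length] at this
    simp [this]

theorem last_eq :
    ∀ (n : ℕ) (y y' : List Q) (q p : Q), y.length = n → y'.length = n →
      (∀ w, compFn δ lam (y ++ [q]) w = compFn δ lam (y' ++ [p]) w) → q = p := by
  intro n
  induction n with
  | zero =>
    intro y y' q p hy hy' h
    have hy0 : y = [] := List.length_eq_zero_iff.mp hy
    have hy'0 : y' = [] := List.length_eq_zero_iff.mp hy'
    subst hy0; subst hy'0
    refine H _ _ (mfEq_of_fun_eq δ lam ?_)
    intro u
    have := h u
    rw [List.nil_append, List.nil_append, compFn_cons, compFn_cons, compFn_nil] at this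
    exact this
  | succ n ih =>
    intro y y' q p hy hy' h
    rcases List.eq_nil_or_concat' y with rfl | ⟨z, q₂, rfl⟩
    · simp at hy
    rcases List.eq_nil_or_concat' y' with rfl | ⟨z', p₂, rfl⟩
    · simp at hy'
    refine H _ _ ?_
    intro u hu r
    have hs : dfaRun δ q u = dfaRun δ p u := synRun δ hu _ _
    have hcross : ∀ v, compFn δ lam
          ((cs δ lam z (mealyMap δ lam q₂ (mealyMap δ lam q u))
            ++ [dfaRun δ q₂ (mealyMap δ lam q u)]) ++ [dfaRun δ p u]) v
        = compFn δ lam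
          ((cs δ lam z' (mealyMap δ lam p₂ (mealyMap δ lam p u))
            ++ [dfaRun δ p₂ (mealyMap δ lam p u)]) ++ [dfaRun δ p u]) v := by
      intro v
      have h1 := cs_cross δ lam h u v
      simp only [cs_concat] at h1
      rw [hs] at h1
      exact h1
    have hcross2 := cancel_concat δ lam hinv hcross
    have hlast := ih (cs δ lam z (mealyMap δ lam q₂ (mealyMap δ lam q u)))
      (cs δ lam z' (mealyMap δ lam p₂ (mealyMap δ lam p u))) _ _
      (by rw [cs_length]; simpa using hy)
      (by rw [cs_length]; simpa using hy') hcross2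
    -- hlast : dfaRun δ q₂ (mealyMap q u) = dfaRun δ p₂ (mealyMap p u)
    have m1 : mealyMap δ lam q u ∈ synSet δ := hreset q u hu
    have m2 : mealyMap δ lam p u ∈ synSet δ := hreset p u hu
    rw [synRun δ m1 r q₂, synRun δ m2 r p₂]
    exact hlast

theorem list_eq :
    ∀ (n : ℕ) (l l' : List Q), l.length = n → l'.length = n →
      (∀ w, compFn δ lam l w = compFn δ lam l' w) → l = l' := by
  intro n
  induction n with
  | zero =>
    intro l l' hl hl' _
    rw [List.length_eq_zero_iff.mp hl, List.length_eq_zero_iff.mp hl']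
  | succ n ih =>
    intro l l' hl hl' h
    rcases List.eq_nil_or_concat' l with rfl | ⟨y, q, rfl⟩
    · simp at hl
    rcases List.eq_nil_or_concat' l' with rfl | ⟨y', p, rfl⟩
    · simp at hl'
    have hy : y.length = n := by simpa using hl
    have hy' : y'.length = n := by simpa using hl'
    have hqp : q = p := last_eq δ lam hinv hreset hsync H hne n y y' q p hy hy' h
    subst hqp
    have hcancel := cancel_concat δ lam hinv h
    rw [ih y y' hy hy' hcancel]

end Main

noncomputable def liftF : FreeSemigroup Q →ₙ* Function.End (List A) :=
  FreeSemigroup.lift (fun q => (mealyMap δ lam q : Function.End (List A)))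

theorem lift_repr (x : FreeSemigroup Q) (w : List A) :
    liftF δ lam x w = compFn δ lam (x.head :: x.tail) w := by
  induction x using FreeSemigroup.recOnMul with
  | ih1 q =>
    show mealyMap δ lam q w = _
    rw [show (FreeSemigroup.of q).head = q from rfl,
        show (FreeSemigroup.of q).tail = ([] : List Q) from rfl, compFn_cons, compFn_nil]
  | ih2 q y _ ihy =>
    rw [map_mul]
    show mealyMap δ lam q (liftF δ lam y w) = _
    rw [ihy]
    exact (compFn_cons δ lam q (y.head :: y.tail) w).symm

end Stmt10Aux

/-- For a simple synchronizing DFA with a reset group coloring, coincidence of modified state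
functions is an automata congruence; hence either all modified state functions are distinct
(and `S(𝒜)` is free) or they are all equal (`𝒜` is singular). -/
theorem stmt10 {Q A : Type*} [Fintype Q] [DecidableEq Q] [Fintype A]
    (δ : Q → A → Q) (lam : Q → A → A)
    (hsync : (synSet δ).Nonempty)
    (hsimple : ∀ r : Q → Q → Prop, Equivalence r →
      (∀ p q, r p q → ∀ a, r (δ p a) (δ q a)) →
      (∀ p q, r p q ↔ p = q) ∨ (∀ p q, r p q))
    (hinv : ∀ q, Function.Bijective (lam q))
    (hreset : ∀ q : Q, ∀ u ∈ synSet δ, mealyMap δ lam q u ∈ synSet δ) :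
    (Equivalence (mfEq δ lam) ∧
      ∀ p q : Q, mfEq δ lam p q → ∀ a : A, mfEq δ lam (δ p a) (δ q a)) ∧
    (((∀ p q : Q, mfEq δ lam p q → p = q) ∧
      Function.Injective
        ⇑(FreeSemigroup.lift
          (fun q => (mealyMap δ lam q : Function.End (List A))) :
            FreeSemigroup Q →ₙ* Function.End (List A))) ∨
      (∀ p q : Q, mfEq δ lam p q)) := by
  classical
  open Stmt10Aux in
  have equiv : Equivalence (mfEq δ lam) :=
    ⟨fun p u hu r => rfl,
     fun h u hu r => (h u hu r).symm,
     fun h1 h2 u hu r => (h1 u hu r).trans (h2 u hu r)⟩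
  have hcongr : ∀ p q, mfEq δ lam p q → ∀ a, mfEq δ lam (δ p a) (δ q a) := by
    intro p q hpq a u hu r
    have h1 := hpq (a :: u) (Stmt10Aux.syn_cons δ hu a) r
    rw [show mealyMap δ lam p (a :: u) = lam p a :: mealyMap δ lam (δ p a) u from rfl,
        show mealyMap δ lam q (a :: u) = lam q a :: mealyMap δ lam (δ q a) u from rfl,
        show ∀ (b : A) (v : List A), dfaRun δ r (b :: v) = dfaRun δ (δ r b) v
          from fun _ _ => rfl,
        show ∀ (b : A) (v : List A), dfaRun δ r (b :: v) = dfaRun δ (δ r b) v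
          from fun _ _ => rfl] at h1
    calc dfaRun δ r (mealyMap δ lam (δ p a) u)
        = dfaRun δ (δ r (lam p a)) (mealyMap δ lam (δ p a) u) :=
          Stmt10Aux.synRun δ (hreset _ u hu) _ _
      _ = dfaRun δ (δ r (lam q a)) (mealyMap δ lam (δ q a) u) := h1
      _ = dfaRun δ r (mealyMap δ lam (δ q a) u) :=
          Stmt10Aux.synRun δ (hreset _ u hu) _ _
  refine ⟨⟨equiv, hcongr⟩, ?_⟩
  rcases hsimple (mfEq δ lam) equiv hcongr with htriv | huniv
  · by_cases hQ : ∀ p q : Q, mfEq δ lam p q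
    · exact Or.inr hQ
    · left
      have H : ∀ p q : Q, mfEq δ lam p q → p = q := fun p q h => (htriv p q).mp h
      refine ⟨H, ?_⟩
      push_neg at hQ
      obtain ⟨p₀, q₀, hne0⟩ := hQ
      have hne : p₀ ≠ q₀ := fun h => hne0 (h ▸ equiv.refl p₀)
      intro x y hxy
      have hxy' : Stmt10Aux.liftF δ lam x = Stmt10Aux.liftF δ lam y := hxy
      have hfun : ∀ w, compFn δ lam (x.head :: x.tail) w
          = compFn δ lam (y.head :: y.tail) w := by
        intro w
        rw [← Stmt10Aux.lift_repr δ lam x w, ← Stmt10Aux.lift_repr δ lam y w, hxy']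
      have hlen := Stmt10Aux.len_eq δ lam hinv hreset hsync H hne
        (x.head :: x.tail).length _ _ le_rfl hfun
      have hlist := Stmt10Aux.list_eq δ lam hinv hreset hsync H hne
        (x.head :: x.tail).length _ _ rfl hlen.symm hfun
      rw [List.cons.injEq] at hlist
      cases x; cases y
      simp only [FreeSemigroup.mk.injEq]
      exact hlist
  · exact Or.inr huniv
end

section
/- Let (A, +) be a nontrivial finite abelian group, identify right-infinite words g = g₀g₁g₂… ∈ A^ω with formal power series F_g(t) = Σ g_i t^i in A[[t]] (as a module over ℤ[[t]]). Let 𝒜 = M(B_k(A), χ_k(A)) and q ∈ A^k a state, F_q(t) its polynomial of degree < k. Then F_{𝒜_q(g)}(t) = (1 − t^k) F_g(t) − F_q(t) for all g ∈ A^ω. -/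
/-- The action of a state of a Mealy automaton on right-infinite words. -/
def mealyOmega {Q A : Type*} (δ : Q → A → Q) (lam : Q → A → A) (q : Q) (g : ℕ → A) :
    ℕ → A :=
  fun n => lam (dfaRun δ q ((List.range n).map g)) (g n)

/-- The transition function of the De Bruijn automaton of order `k`. -/
def dbStep (A : Type*) (k : ℕ) (q : Fin k → A) (x : A) : Fin k → A :=
  fun i => if h : (i : ℕ) + 1 < k then q ⟨(i : ℕ) + 1, h⟩ else x

theorem dfaRun_concat {Q A : Type*} (δ : Q → A → Q) (q : Q) (w : List A) (x : A) :
    dfaRun δ q (w ++ [x]) = δ (dfaRun δ q w) x := by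
  simp [dfaRun]

theorem dfaRun_dbStep_apply {A : Type*} {k : ℕ} (q : Fin k → A) (w : List A) (i : Fin k) :
    dfaRun (dbStep A k) q w i = (List.ofFn q ++ w)[(i : ℕ) + w.length]'(by simp) := by
  induction w using List.reverseRecOn generalizing i with
  | nil => simp [dfaRun]
  | append_singleton w x ih =>
    rw [dfaRun_concat, dbStep]
    split_ifs with h
    · rw [ih]
      simp only [← List.append_assoc, List.length_append, List.length_singleton]
      rw [List.getElem_append_left (as := List.ofFn q ++ w) (by simp; omega)]
      congr 1
      omega
    · simp only [← List.append_assoc, List.length_append, List.length_singleton]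
      rw [List.getElem_append_right (by simp; omega)]
      simp

theorem getElem_ofFn_append_map_range {A : Type*} {k : ℕ} [NeZero k] (q : Fin k → A)
    (g : ℕ → A) (n : ℕ) :
    (List.ofFn q ++ (List.range n).map g)[n]'(by simp [NeZero.pos]) =
      if h : n < k then q ⟨n, h⟩ else g (n - k) := by
  split_ifs with h
  · rw [List.getElem_append_left (by simpa using h)]
    simp
  · rw [List.getElem_append_right (by simpa using h)]
    simp

theorem stmt17_general {A : Type*} [AddCommGroup A]
    (k : ℕ) [NeZero k] (q : Fin k → A) (g : ℕ → A) (n : ℕ) :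
    mealyOmega (dbStep A k) (fun p x => x - p 0) q g n =
      (g n - if k ≤ n then g (n - k) else 0) - (if h : n < k then q ⟨n, h⟩ else 0) := by
  have hlen : (0 : Fin k).val + ((List.range n).map g).length = n := by simp
  rw [mealyOmega, dfaRun_dbStep_apply]
  simp only [hlen, getElem_ofFn_append_map_range]
  split_ifs <;> first | omega | abel

/-- Identifying `A^ω` with `A[[t]]` coefficientwise, the action of a state `q` of
`M(B_k(A), χ_k(A))` on power series is `F ↦ (1 - t^k)·F - F_q`: the `n`-th coefficient of
`𝒜_q(g)` is `g n - g (n - k)` (the latter present only when `n ≥ k`) minus the `n`-th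
coefficient of the polynomial `F_q` (present only when `n < k`). -/
theorem stmt17 {A : Type*} [AddCommGroup A] [Fintype A] [Nontrivial A]
    (k : ℕ) [NeZero k] (q : Fin k → A) (g : ℕ → A) (n : ℕ) :
    mealyOmega (dbStep A k) (fun p x => x - p 0) q g n =
      (g n - if k ≤ n then g (n - k) else 0) - (if h : n < k then q ⟨n, h⟩ else 0) :=
  stmt17_general k q g n
end

section
/- Let A be a nontrivial finite abelian group and k ≥ 1. If ℓ₀ < ℓ₁ < ⋯ < ℓ_N are integers and c₀, …, c_N are polynomials over A of degree at most k−1 such that Σ_{i=0}^{N} (1 − t^k)^{ℓ_i} c_i(t) = 0 in the ring of formal Laurent-type series (after clearing denominators, in A[[t]]), then c_i = 0 for all i. -/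
/-!
Normalising the exponents to be natural numbers `m₀ < ⋯ < m_N`, the coefficient of
`t^(q k + r)` (with `r < k`) in `(1 - t^k)^m c(t)` is `(-1)^q (m choose q) c_r`, because `c` has
degree `< k` so the blocks of `k` coefficients do not interact. At `q = m_i` the terms with
`j < i` vanish since `m_j < m_i`, so if all `c_j` with `j > i` are already known to vanish, this
coefficient of the sum is `± c_i(r)`. Downward induction on `i` finishes the proof.
-/

section

variable {A : Type*} [AddCommGroup A] {k : ℕ} {S : AddAut (ℕ → A)}

/-- `S` is multiplication by `1 - t^k` on `A[[t]]`, power series being coefficient sequences. -/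
def IsMulOneSubXPow (k : ℕ) (S : AddAut (ℕ → A)) : Prop :=
  ∀ (f : ℕ → A) (n : ℕ), S f n = f n - if k ≤ n then f (n - k) else 0

namespace IsMulOneSubXPow

lemma apply_of_lt (hS : IsMulOneSubXPow k S) (f : ℕ → A) {n : ℕ} (hn : n < k) : S f n = f n := by
  rw [hS f, if_neg (by omega), sub_zero]

lemma apply_add (hS : IsMulOneSubXPow k S) (f : ℕ → A) (n : ℕ) : S f (n + k) = f (n + k) - f n := by
  rw [hS f, if_pos (Nat.le_add_left k n), Nat.add_sub_cancel]

lemma nsmul_apply_mul_add (hS : IsMulOneSubXPow k S) {f : ℕ → A} (hf : ∀ n, k ≤ n → f n = 0) (m q : ℕ) {r : ℕ} (hr : r < k) :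
    (m • S) f (q * k + r) = ((-1) ^ q * m.choose q : ℤ) • f r := by
  induction m generalizing q with
  | zero =>
    rw [zero_nsmul, AddAut.zero_apply]
    cases q with
    | zero => simp
    | succ q => simpa using hf _ (by nlinarith)
  | succ m ih =>
    rw [succ_nsmul', AddAut.add_apply]
    cases q with
    | zero => simpa [hS.apply_of_lt _ hr] using ih 0
    | succ q =>
      have hblock : (q + 1) * k + r = q * k + r + k := by ring
      rw [hblock, hS.apply_add, ← hblock, ih (q + 1), ih q, ← sub_smul, Nat.choose_succ_succ']
      congr 1
      push_cast
      ring

lemma eq_zero_of_sum_nsmul_apply_eq_zero (hS : IsMulOneSubXPow k S) {ι : Type*} [Fintype ι] [LinearOrder ι] {m : ι → ℕ} (hm : StrictMono m)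
    {c : ι → ℕ → A} (hdeg : ∀ i n, k ≤ n → c i n = 0) (hsum : ∑ i, (m i • S) (c i) = 0)
    (i : ι) : c i = 0 := by
  induction i using WellFoundedGT.induction with | _ i ih => ?_
  funext r
  obtain hr | hr := le_or_gt k r
  · exact hdeg i r hr
  have hcoeff := congrFun hsum (m i * k + r)
  rw [Finset.sum_apply, Finset.sum_eq_single i, hS.nsmul_apply_mul_add (hdeg i) _ _ hr,
    Nat.choose_self, Nat.cast_one, mul_one] at hcoeff
  · exact ((isUnit_neg_one (α := ℤ)).pow _).smul_eq_zero.mp hcoeff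
  · intro j _ hji
    rcases hji.lt_or_gt with hlt | hgt
    · rw [hS.nsmul_apply_mul_add (hdeg j) _ _ hr, Nat.choose_eq_zero_of_lt (hm hlt)]
      simp
    · rw [ih j hgt, map_zero, Pi.zero_apply]
  · exact fun hi => (hi (Finset.mem_univ i)).elim

lemma eq_zero_of_sum_zsmul_apply_eq_zero (hS : IsMulOneSubXPow k S) {ι : Type*} [Fintype ι] [LinearOrder ι] {l : ι → ℤ} (hl : StrictMono l)
    {c : ι → ℕ → A} (hdeg : ∀ i n, k ≤ n → c i n = 0) (hsum : ∑ i, (l i • S) (c i) = 0)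
    (i : ι) : c i = 0 := by
  obtain ⟨b, hb⟩ := (Set.finite_range l).bddBelow
  have hshift : ∀ j, (((l j - b).toNat : ℕ) : ℤ) = -b + l j := fun j => by
    rw [Int.toNat_of_nonneg (sub_nonneg.mpr (hb ⟨j, rfl⟩))]
    ring
  have hm : StrictMono fun j => (l j - b).toNat := fun a a' h => by
    have := hl h
    have := hb ⟨a, rfl⟩
    dsimp only
    omega
  refine hS.eq_zero_of_sum_nsmul_apply_eq_zero hm hdeg ?_ i
  have hshifted := congrArg ((-b) • S) hsum
  rw [map_sum, map_zero] at hshifted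
  simpa only [← natCast_zsmul, hshift, add_zsmul, AddAut.add_apply] using hshifted

end IsMulOneSubXPow

end

theorem stmt18_general {A : Type*} [AddCommGroup A]
    (k : ℕ)
    (S : AddAut (ℕ → A))
    (hS : ∀ (f : ℕ → A) (n : ℕ), S f n = f n - if k ≤ n then f (n - k) else 0)
    (N : ℕ) (l : Fin (N + 1) → ℤ) (hl : StrictMono l)
    (c : Fin (N + 1) → ℕ → A) (hdeg : ∀ (i : Fin (N + 1)) (n : ℕ), k ≤ n → c i n = 0)
    (hsum : ∑ i : Fin (N + 1), ((l i) • S) (c i) = 0) :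
    ∀ i : Fin (N + 1), c i = 0 :=
  IsMulOneSubXPow.eq_zero_of_sum_zsmul_apply_eq_zero hS hl hdeg hsum

/-- If `S` is the additive automorphism `F ↦ (1 - t^k)·F` of `A[[t]]` (power series with
coefficients in the abelian group `A`, identified with `ℕ → A` coefficientwise), distinct
integer powers `S^{ℓ₀}, …, S^{ℓ_N}` applied to polynomials `c_i` of degree `< k` can only
sum to zero when all `c_i` vanish. -/
theorem stmt18 {A : Type*} [AddCommGroup A] [Fintype A] [Nontrivial A]
    (k : ℕ) (hk : 1 ≤ k)
    (S : AddAut (ℕ → A))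
    (hS : ∀ (f : ℕ → A) (n : ℕ), S f n = f n - if k ≤ n then f (n - k) else 0)
    (N : ℕ) (l : Fin (N + 1) → ℤ) (hl : StrictMono l)
    (c : Fin (N + 1) → ℕ → A) (hdeg : ∀ (i : Fin (N + 1)) (n : ℕ), k ≤ n → c i n = 0)
    (hsum : ∑ i : Fin (N + 1), ((l i) • S) (c i) = 0) :
    ∀ i : Fin (N + 1), c i = 0 :=
  stmt18_general k S hS N l hl c hdeg hsum
end

section
/- Let (A, +) be a nontrivial finite abelian group, k ≥ 1, and let B(k, A) be the group generated by the tree automorphisms {𝒜_q : q ∈ A^k} of the Mealy automaton M(B_k(A), χ_k(A)). Then B(k, A) is isomorphic to the wreath product A^k ≀ ℤ, i.e., (⊕_{ℤ} A^k) ⋊ ℤ where ℤ acts by shifting coordinates. -/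
/-- The wreath product `A^k ≀ ℤ`, that is, `(⊕_ℤ A^k) ⋊ ℤ` where `ℤ` acts by shifting
the coordinates. -/
abbrev wreathAkZ (A : Type*) [AddCommGroup A] (k : ℕ) :=
  SemidirectProduct (Multiplicative (ℤ →₀ (Fin k → A))) (Multiplicative ℤ)
    (zpowersHom _
      (AddEquiv.toMultiplicative
        (Finsupp.domCongr (M := Fin k → A) (Equiv.addRight (1 : ℤ)))))

/-!
Read an infinite word over `A` as a power series `F = ∑ Fₙ tⁿ`. The state `q` acts by
`F ↦ F - (q(t) + tᵏ F)` with `q(t) = q₀ + q₁ t + ⋯ + q_{k-1} t^{k-1}`, i.e. by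
`F ↦ (1 - tᵏ) F - q(t)`. Hence `(f, n) ∈ A^k ≀ ℤ` acts by the affine map
`F ↦ (1 - tᵏ)ⁿ F - ∑ₘ (1 - tᵏ)ᵐ fₘ(t)`, and this is a homomorphism sending `(δ₀ q, 1)` to `𝒜_q`;
these elements generate the wreath product. All these maps are causal, so they act on finite
words by truncation without losing information. Faithfulness comes down to the independence of
the series `(1 - tᵏ)ᵐ q(t)`: for `m ≥ 0` the block of coefficients in degrees `[mk, (m+1)k)` is
`(-1)ᵐ q` and nothing lies above it.
-/

namespace DeBruijn

section Causal

variable {α β γ : Type*}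

def IsCausal (g : (ℕ → α) → ℕ → β) : Prop :=
  ∀ n F F', (∀ m ≤ n, F m = F' m) → g F n = g F' n

lemma isCausal_id : IsCausal (id : (ℕ → α) → ℕ → α) :=
  fun n _ _ h => h n le_rfl

lemma IsCausal.comp {g : (ℕ → β) → ℕ → γ} {h : (ℕ → α) → ℕ → β} (hg : IsCausal g)
    (hh : IsCausal h) : IsCausal (g ∘ h) :=
  fun n _ _ hF => hg n _ _ fun m hm => hh m _ _ fun l hl => hF l (hl.trans hm)

variable (α) in
def causalPerm : Subgroup (Equiv.Perm (ℕ → α)) where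
  carrier := {g | IsCausal g ∧ IsCausal ⇑g⁻¹}
  mul_mem' := fun ⟨hg, hg'⟩ ⟨hh, hh'⟩ => ⟨hg.comp hh, hh'.comp hg'⟩
  one_mem' := ⟨isCausal_id, isCausal_id⟩
  inv_mem' := fun ⟨hg, hg'⟩ => ⟨hg', by rwa [inv_inv]⟩

variable [Zero α]

def padZero (u : List α) : ℕ → α := fun n => u.getD n 0

lemma padZero_of_lt {u : List α} {n : ℕ} (h : n < u.length) : padZero u n = u[n] :=
  List.getD_eq_getElem u 0 h

def truncate (g : (ℕ → α) → ℕ → α) (u : List α) : List α :=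
  List.ofFn fun i : Fin u.length => g (padZero u) i

@[simp]
lemma length_truncate (g : (ℕ → α) → ℕ → α) (u : List α) : (truncate g u).length = u.length :=
  List.length_ofFn

lemma getElem_truncate (g : (ℕ → α) → ℕ → α) (u : List α) (n : ℕ)
    (h : n < (truncate g u).length) : (truncate g u)[n] = g (padZero u) n :=
  List.getElem_ofFn ..

lemma truncate_id (u : List α) : truncate id u = u :=
  List.ext_getElem (length_truncate _ _) fun n h _ => by
    rw [getElem_truncate, id, padZero_of_lt]

lemma truncate_comp {g h : (ℕ → α) → ℕ → α} (hg : IsCausal g) (u : List α) :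
    truncate (g ∘ h) u = truncate g (truncate h u) := by
  refine List.ext_getElem (by simp) fun n hn hn' => ?_
  rw [getElem_truncate, getElem_truncate, Function.comp_apply]
  refine hg n _ _ fun m hm => ?_
  have hm' : m < (truncate h u).length := by rw [length_truncate] at hn ⊢; omega
  rw [padZero_of_lt hm', getElem_truncate]

def truncHom : causalPerm α →* Equiv.Perm (List α) where
  toFun g :=
    { toFun := truncate g
      invFun := truncate ⇑(g : Equiv.Perm (ℕ → α))⁻¹
      left_inv u := by
        rw [← truncate_comp g.2.2, ← Equiv.Perm.coe_mul, inv_mul_cancel]; exact truncate_id u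
      right_inv u := by
        rw [← truncate_comp g.2.1, ← Equiv.Perm.coe_mul, mul_inv_cancel]; exact truncate_id u }
  map_one' := Equiv.ext truncate_id
  map_mul' g h := Equiv.ext (truncate_comp g.2.1)

lemma truncHom_apply (g : causalPerm α) (u : List α) : truncHom g u = truncate g u := rfl

lemma truncHom_injective : Function.Injective (truncHom (α := α)) := by
  refine (injective_iff_map_eq_one _).2 fun g hg => Subtype.ext <| Equiv.ext fun F => ?_
  funext n
  set u := List.ofFn fun i : Fin (n + 1) => F i
  have hu : ∀ m ≤ n, padZero u m = F m := fun m hm => by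
    rw [padZero_of_lt (by rw [List.length_ofFn]; omega), List.getElem_ofFn]
  have hfix : truncate g u = u := by rw [← truncHom_apply, hg]; rfl
  calc (g : Equiv.Perm (ℕ → α)) F n = (g : Equiv.Perm (ℕ → α)) (padZero u) n :=
        g.2.1 n _ _ fun m hm => (hu m hm).symm
    _ = (truncate g u)[n]'(by simp [u]) := (getElem_truncate ..).symm
    _ = F n := by simp only [hfix, u, List.getElem_ofFn]

end Causal

section Series

variable {A : Type*} [AddCommGroup A] (k : ℕ)

def mulTPow : (ℕ → A) →+ (ℕ → A) where
  toFun F n := if k ≤ n then F (n - k) else 0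
  map_zero' := funext fun n => by split_ifs <;> rfl
  map_add' F G := funext fun n => by simp only [Pi.add_apply]; split_ifs <;> simp

lemma mulTPow_apply (F : ℕ → A) (n : ℕ) : mulTPow k F n = if k ≤ n then F (n - k) else 0 := rfl

def geomSum (F : ℕ → A) : ℕ → A := fun n => ∑ j ∈ Finset.range (n / k + 1), F (n - j * k)

lemma isCausal_sub_mulTPow : IsCausal fun F : ℕ → A => F - mulTPow k F := by
  intro n F F' h
  simp only [Pi.sub_apply, mulTPow_apply, h n le_rfl]
  split_ifs
  · rw [h (n - k) (Nat.sub_le n k)]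
  · rfl

lemma isCausal_geomSum : IsCausal (geomSum (A := A) k) :=
  fun n _ _ h => Finset.sum_congr rfl fun _ _ => h _ (Nat.sub_le n _)

variable [NeZero k]

lemma sub_mulTPow_geomSum (F : ℕ → A) : geomSum k F - mulTPow k (geomSum k F) = F := by
  funext n
  simp only [Pi.sub_apply, mulTPow_apply, geomSum]
  split_ifs with hk
  · have hdiv : n / k = (n - k) / k + 1 := Nat.div_eq_sub_div (Nat.pos_of_neZero k) hk
    have hidx : ∀ j, n - (j + 1) * k = n - k - j * k := fun j => by rw [add_mul, one_mul]; omega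
    rw [hdiv, Finset.sum_range_succ', zero_mul, Nat.sub_zero]
    simp only [hidx]
    abel
  · simp [Nat.div_eq_of_lt (not_le.mp hk)]

lemma eq_zero_of_sub_mulTPow_eq_zero {F : ℕ → A} (h : F - mulTPow k F = 0) : F = 0 := by
  funext n
  induction n using Nat.strong_induction_on with
  | _ n ih =>
    have hn := congrFun h n
    simp only [Pi.sub_apply, mulTPow_apply, Pi.zero_apply] at hn ih ⊢
    split_ifs at hn with hk
    · rwa [ih (n - k) (Nat.sub_lt_of_pos_le (Nat.pos_of_neZero k) hk), sub_zero] at hn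
    · rwa [sub_zero] at hn

variable (A) in
noncomputable def oneSubTPow : (ℕ → A) ≃ₗ[ℤ] (ℕ → A) :=
  AddEquiv.toIntLinearEquiv
    { toFun F := F - mulTPow k F
      invFun := geomSum k
      left_inv F := by
        rw [← sub_eq_zero]
        refine eq_zero_of_sub_mulTPow_eq_zero k ?_
        rw [map_sub, sub_sub_sub_comm, sub_mulTPow_geomSum, sub_self]
      right_inv := sub_mulTPow_geomSum k
      map_add' F G := by simp only [map_add]; abel }

lemma oneSubTPow_apply (F : ℕ → A) (n : ℕ) :
    oneSubTPow A k F n = F n - if k ≤ n then F (n - k) else 0 := rfl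

lemma isCausal_oneSubTPow_zpow (z : ℤ) : IsCausal ⇑(oneSubTPow A k ^ z) := by
  have hmem : MulAction.toPermHom _ _ (oneSubTPow A k) ∈ causalPerm A :=
    ⟨isCausal_sub_mulTPow k, isCausal_geomSum k⟩
  have := zpow_mem hmem z
  rw [← map_zpow] at this
  exact this.1

end Series

section Poly

variable {A : Type*} [AddCommGroup A] (k : ℕ)

def toPoly : (Fin k → A) →+ (ℕ → A) where
  toFun q n := if h : n < k then q ⟨n, h⟩ else 0
  map_zero' := funext fun n => by split_ifs <;> rfl
  map_add' q p := funext fun n => by simp only [Pi.add_apply]; split_ifs <;> simp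

lemma toPoly_apply (q : Fin k → A) (n : ℕ) :
    toPoly k q n = if h : n < k then q ⟨n, h⟩ else 0 := rfl

lemma toPoly_add_mulTPow_apply (q : Fin k → A) (F : ℕ → A) (n : ℕ) :
    toPoly k q n + mulTPow k F n = if h : n < k then q ⟨n, h⟩ else F (n - k) := by
  simp only [toPoly_apply, mulTPow_apply]
  split_ifs <;> first | omega | simp

variable [NeZero k]

lemma oneSubTPow_pow_toPoly_apply_of_le (q : Fin k → A) (m : ℕ) {n : ℕ} (hn : (m + 1) * k ≤ n) :
    (oneSubTPow A k ^ m) (toPoly k q) n = 0 := by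
  induction m generalizing n with
  | zero => simp [toPoly_apply, show ¬n < k by omega]
  | succ m ih =>
    have hk : (m + 1 + 1) * k = (m + 1) * k + k := by ring
    rw [pow_succ', LinearEquiv.mul_apply, oneSubTPow_apply, if_pos (by nlinarith), ih (by omega),
      ih (by omega), sub_zero]

lemma oneSubTPow_pow_toPoly_apply_top (q : Fin k → A) (m : ℕ) (i : Fin k) :
    (oneSubTPow A k ^ m) (toPoly k q) (m * k + i) = (-1 : ℤˣ) ^ m • q i := by
  induction m with
  | zero => simp [toPoly_apply]
  | succ m ih =>
    have hidx : (m + 1) * k + i - k = m * k + i := by rw [add_mul, one_mul]; omega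
    rw [pow_succ', LinearEquiv.mul_apply, oneSubTPow_apply, if_pos (by nlinarith), hidx, ih,
      oneSubTPow_pow_toPoly_apply_of_le k q m (by nlinarith), zero_sub, pow_succ', mul_smul,
      Units.neg_smul, one_smul]

end Poly

section PolySum

variable {A : Type*} [AddCommGroup A] (k : ℕ) [NeZero k]

noncomputable def polySum : (ℤ →₀ (Fin k → A)) →+ (ℕ → A) :=
  Finsupp.liftAddHom fun m => (oneSubTPow A k ^ m).toLinearMap.toAddMonoidHom.comp (toPoly k)

lemma polySum_single (m : ℤ) (q : Fin k → A) :
    polySum k (Finsupp.single m q) = (oneSubTPow A k ^ m) (toPoly k q) :=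
  Finsupp.liftAddHom_apply_single ..

lemma polySum_domCongr_addRight (z : ℤ) (f : ℤ →₀ (Fin k → A)) :
    polySum k (Finsupp.domCongr (Equiv.addRight z) f) = (oneSubTPow A k ^ z) (polySum k f) := by
  induction f using Finsupp.induction with
  | zero => simp
  | single_add m q f _ _ ih =>
    rw [map_add, map_add, ih, map_add, Finsupp.domCongr_apply, Finsupp.equivMapDomain_single,
      polySum_single, polySum_single, show Equiv.addRight z m = z + m from add_comm m z,
      zpow_add, LinearEquiv.mul_apply, map_add]

lemma polySum_apply_top {f : ℤ →₀ (Fin k → A)} {M : ℕ} (hf : ∀ m ∈ f.support, 0 ≤ m ∧ m ≤ M)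
    (i : Fin k) : polySum k f (M * k + i) = (-1 : ℤˣ) ^ M • f M i := by
  have hsum : polySum k f = f.sum fun m q => (oneSubTPow A k ^ m) (toPoly k q) := by
    rw [polySum, Finsupp.liftAddHom_apply]; rfl
  rw [hsum, Finsupp.sum, Finset.sum_apply, Finset.sum_eq_single (M : ℤ), zpow_natCast,
    oneSubTPow_pow_toPoly_apply_top]
  · intro m hm hne
    obtain ⟨j, rfl⟩ := Int.eq_ofNat_of_zero_le (hf m hm).1
    have hj : j + 1 ≤ M := by have := (hf _ hm).2; omega
    rw [zpow_natCast]
    exact oneSubTPow_pow_toPoly_apply_of_le k _ j (by nlinarith)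
  · intro hM
    rw [Finsupp.notMem_support_iff.mp hM, map_zero, map_zero, Pi.zero_apply]

lemma eq_zero_of_polySum_eq_zero_of_nonneg {f : ℤ →₀ (Fin k → A)} (hf : ∀ m ∈ f.support, 0 ≤ m)
    (h : polySum k f = 0) : f = 0 := by
  by_contra hne
  have hne' := Finsupp.support_nonempty_iff.2 hne
  have hmax := f.support.max'_mem hne'
  obtain ⟨M, hM⟩ := Int.eq_ofNat_of_zero_le (hf _ hmax)
  have hbound : ∀ m ∈ f.support, 0 ≤ m ∧ m ≤ M := fun m hm => ⟨hf m hm, hM ▸ f.support.le_max' m hm⟩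
  have hfM : f M ≠ 0 := Finsupp.mem_support_iff.1 (hM ▸ hmax)
  obtain ⟨i, hi⟩ := Function.ne_iff.mp hfM
  have htop := polySum_apply_top k hbound i
  rw [h, Pi.zero_apply, eq_comm, smul_eq_zero_iff_eq] at htop
  exact hi htop

lemma polySum_injective : Function.Injective (polySum (A := A) k) := by
  refine (injective_iff_map_eq_zero _).2 fun f hf => ?_
  obtain ⟨b, hb⟩ := f.support.bddBelow
  set f' := Finsupp.domCongr (Equiv.addRight (-b)) f
  have hf' : ∀ m, f' m = f (m + b) := fun m => by simp [f', Finsupp.equivMapDomain_apply]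
  have hnonneg : ∀ m ∈ f'.support, 0 ≤ m := fun m hm => by
    have := hb (Finsupp.mem_support_iff.2 ((hf' m) ▸ Finsupp.mem_support_iff.1 hm))
    omega
  have hzero : f' = 0 :=
    eq_zero_of_polySum_eq_zero_of_nonneg k hnonneg (by rw [polySum_domCongr_addRight, hf, map_zero])
  rwa [map_eq_zero_iff _ (Finsupp.domCongr _).injective] at hzero

end PolySum

section Wreath

open Multiplicative

variable {A : Type*} [AddCommGroup A] (k : ℕ)

lemma toAdd_wreathAction (n : Multiplicative ℤ) (f : Multiplicative (ℤ →₀ (Fin k → A))) :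
    toAdd (zpowersHom _ (AddEquiv.toMultiplicative
      (Finsupp.domCongr (M := Fin k → A) (Equiv.addRight (1 : ℤ)))) n f) =
      Finsupp.domCongr (Equiv.addRight (toAdd n)) (toAdd f) := by
  ext b : 1
  simp only [zpowersHom_apply, Finsupp.domCongr_apply, Finsupp.equivMapDomain_apply,
    Equiv.addRight_symm_apply, ← sub_eq_add_neg]
  set ψ : MulAut (Multiplicative (ℤ →₀ (Fin k → A))) :=
    AddEquiv.toMultiplicative (Finsupp.domCongr (M := Fin k → A) (Equiv.addRight (1 : ℤ)))
  have hψ : ∀ f b, toAdd (ψ f) b = toAdd f (b - 1) := fun _ _ => rfl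
  have hψinv : ∀ f b, toAdd (ψ⁻¹ f) b = toAdd f (b + 1) := fun _ _ => rfl
  induction toAdd n using Int.induction_on generalizing f b with
  | zero => rw [zpow_zero, MulAut.one_apply, sub_zero]
  | succ z ih => rw [zpow_add_one, MulAut.mul_apply, ih, hψ, sub_add_eq_sub_sub, sub_right_comm]
  | pred z ih => rw [zpow_sub_one, MulAut.mul_apply, ih, hψinv]; ring_nf

variable [NeZero k]

noncomputable def seriesAction : wreathAkZ A k →* Equiv.Perm (ℕ → A) where
  toFun g := Equiv.subRight (polySum k (toAdd g.left)) *
    MulAction.toPerm (oneSubTPow A k ^ toAdd g.right)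
  map_one' := by ext; simp
  map_mul' g h := Equiv.ext fun F => by
    simp only [Equiv.Perm.mul_apply, Equiv.subRight_apply, MulAction.toPerm_apply,
      LinearEquiv.smul_def, SemidirectProduct.mul_left, SemidirectProduct.mul_right, toAdd_mul,
      map_add, toAdd_wreathAction, polySum_domCongr_addRight, zpow_add, LinearEquiv.mul_apply,
      map_sub]
    abel

lemma seriesAction_apply (g : wreathAkZ A k) (F : ℕ → A) :
    seriesAction k g F = (oneSubTPow A k ^ toAdd g.right) F - polySum k (toAdd g.left) := rfl

lemma seriesAction_mem_causalPerm (g : wreathAkZ A k) : seriesAction k g ∈ causalPerm A := by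
  have hcausal : ∀ g : wreathAkZ A k, IsCausal ⇑(seriesAction k g) := fun g n F F' h => by
    simp only [seriesAction_apply, Pi.sub_apply, isCausal_oneSubTPow_zpow k _ n F F' h]
  exact ⟨hcausal g, by simpa only [← map_inv] using hcausal g⁻¹⟩

lemma seriesAction_injective [Nontrivial A] : Function.Injective (seriesAction (A := A) k) := by
  refine (injective_iff_map_eq_one _).2 fun g hg => ?_
  have hfix : ∀ F, (oneSubTPow A k ^ toAdd g.right) F - polySum k (toAdd g.left) = F :=
    fun F => by rw [← seriesAction_apply, hg, Equiv.Perm.one_apply]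
  have hleft : toAdd g.left = 0 :=
    polySum_injective (A := A) k (by simpa [map_zero] using hfix 0)
  obtain ⟨q, hq⟩ := exists_ne (0 : Fin k → A)
  have hright : toAdd g.right = 0 := by
    refine Finsupp.single_left_injective hq (polySum_injective (A := A) k ?_)
    simpa [polySum_single, hleft] using hfix (toPoly k q)
  exact SemidirectProduct.ext (toAdd.injective hleft) (toAdd.injective hright)

end Wreath

section Generators

open Multiplicative SemidirectProduct

variable {A : Type*} [AddCommGroup A] (k : ℕ)

noncomputable def generator (q : Fin k → A) : wreathAkZ A k := ⟨ofAdd (Finsupp.single 0 q), ofAdd 1⟩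

lemma inl_single_eq_conj (z : ℤ) (q : Fin k → A) :
    (inl (ofAdd (Finsupp.single z q)) : wreathAkZ A k) =
      inr (ofAdd z) * inl (ofAdd (Finsupp.single 0 q)) * (inr (ofAdd z))⁻¹ := by
  rw [← map_inv, ← inl_aut]
  congr 1
  apply toAdd.injective
  rw [toAdd_wreathAction, toAdd_ofAdd, toAdd_ofAdd, toAdd_ofAdd, Finsupp.domCongr_apply,
    Finsupp.equivMapDomain_single]
  simp

lemma closure_range_generator : Subgroup.closure (Set.range (generator (A := A) k)) = ⊤ := by
  set H := Subgroup.closure (Set.range (generator (A := A) k))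
  have hgen : ∀ q, generator k q ∈ H := fun q => Subgroup.subset_closure ⟨q, rfl⟩
  have hshift : (inr (ofAdd 1) : wreathAkZ A k) ∈ H := by
    convert hgen 0 using 1
    exact SemidirectProduct.ext (by simp [generator]) rfl
  have hinr : ∀ z : ℤ, (inr (ofAdd z) : wreathAkZ A k) ∈ H := fun z => by
    have := H.zpow_mem hshift z
    rwa [← map_zpow, ← ofAdd_zsmul, smul_eq_mul, mul_one] at this
  have hsingle : ∀ z q, (inl (ofAdd (Finsupp.single z q)) : wreathAkZ A k) ∈ H := fun z q => by
    have h0 : (inl (ofAdd (Finsupp.single 0 q)) : wreathAkZ A k) =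
        generator k q * (inr (ofAdd 1))⁻¹ := by
      rw [eq_mul_inv_iff_mul_eq, generator, mk_eq_inl_mul_inr]
    rw [inl_single_eq_conj, h0]
    exact H.mul_mem (H.mul_mem (hinr z) (H.mul_mem (hgen q) (H.inv_mem hshift)))
      (H.inv_mem (hinr z))
  have hinl : ∀ f, (inl (ofAdd f) : wreathAkZ A k) ∈ H := fun f => by
    induction f using Finsupp.induction with
    | zero => exact H.one_mem
    | single_add z q f _ _ ih => rw [ofAdd_add, map_mul]; exact H.mul_mem (hsingle z q) ih
  refine eq_top_iff.2 fun x _ => ?_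
  rw [← inl_left_mul_inr_right x]
  exact H.mul_mem (hinl (toAdd x.left)) (hinr (toAdd x.right))

end Generators

section Mealy

variable {A : Type*} [AddCommGroup A] (k : ℕ) [NeZero k]

-- The state holds the last `k` letters read, so the letter `k` steps back is the coefficient of
-- `q(t) + tᵏ F`.
lemma mealyMap_deBruijn (q : Fin k → A) (u : List A) :
    mealyMap (dbStep A k) (fun p x => x - p 0) q u =
      truncate (fun F => F - (toPoly k q + mulTPow k F)) u := by
  induction u generalizing q with
  | nil => rfl
  | cons a u ih =>
    rw [mealyMap, ih, truncate, truncate, List.length_cons, List.ofFn_succ]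
    congr 1
    · simp [padZero, toPoly_add_mulTPow_apply, Nat.pos_of_neZero k]
    · refine congrArg List.ofFn (funext fun i => ?_)
      simp only [Pi.sub_apply, Pi.add_apply, toPoly_add_mulTPow_apply, padZero,
        List.getD_cons_succ, Fin.val_succ]
      congr 1
      simp only [dbStep]
      split_ifs
      · rfl
      · rw [show (i : ℕ) + 1 - k = 0 by omega, List.getD_cons_zero]
      · omega
      · rw [show (i : ℕ) + 1 - k = (i - k) + 1 by omega, List.getD_cons_succ]

end Mealy

section WordAction

variable {A : Type*} [AddCommGroup A] (k : ℕ) [NeZero k]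

noncomputable def wordAction : wreathAkZ A k →* Equiv.Perm (List A) :=
  truncHom.comp ((seriesAction k).codRestrict (causalPerm A) (seriesAction_mem_causalPerm k))

lemma wordAction_injective [Nontrivial A] : Function.Injective (wordAction (A := A) k) :=
  truncHom_injective.comp fun _ _ h => seriesAction_injective k (congrArg Subtype.val h)

lemma wordAction_generator (q : Fin k → A) (u : List A) :
    wordAction k (generator k q) u = mealyMap (dbStep A k) (fun p x => x - p 0) q u := by
  rw [mealyMap_deBruijn]
  refine congrArg (truncate · u) (funext fun F => ?_)
  change (oneSubTPow A k ^ (1 : ℤ)) F - polySum k (Finsupp.single 0 q) = _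
  rw [zpow_one, polySum_single, zpow_zero, LinearEquiv.coe_one, id]
  change F - mulTPow k F - toPoly k q = _
  abel

end WordAction

end DeBruijn

theorem stmt19_general {A : Type*} [AddCommGroup A] [Nontrivial A]
    (k : ℕ) [NeZero k]
    (e : (Fin k → A) → Equiv.Perm (List A))
    (he : ∀ (q : Fin k → A) (u : List A),
      e q u = mealyMap (dbStep A k) (fun p x => x - p 0) q u) :
    Nonempty (↥(Subgroup.closure (Set.range e)) ≃* wreathAkZ A k) := by
  have he' : e = DeBruijn.wordAction k ∘ DeBruijn.generator k :=
    funext fun q => Equiv.ext fun u => (he q u).trans (DeBruijn.wordAction_generator k q u).symm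
  have hrange : Subgroup.closure (Set.range e) = (DeBruijn.wordAction k).range := by
    rw [he', Set.range_comp, ← MonoidHom.map_closure, DeBruijn.closure_range_generator,
      MonoidHom.range_eq_map]
  exact ⟨(MulEquiv.subgroupCongr hrange).trans
    (MonoidHom.ofInjective (DeBruijn.wordAction_injective k)).symm⟩

/-- For a nontrivial finite abelian group `A`, the group `B(k, A)` generated by the tree
automorphisms `𝒜_q` of the Mealy automaton `M(B_k(A), χ_k(A))` is isomorphic to the wreath
product `A^k ≀ ℤ`. -/
theorem stmt19 {A : Type*} [AddCommGroup A] [Fintype A] [Nontrivial A] [DecidableEq A]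
    (k : ℕ) [NeZero k]
    (e : (Fin k → A) → Equiv.Perm (List A))
    (he : ∀ (q : Fin k → A) (u : List A),
      e q u = mealyMap (dbStep A k) (fun p x => x - p 0) q u) :
    Nonempty (↥(Subgroup.closure (Set.range e)) ≃* wreathAkZ A k) :=
  stmt19_general k e he
end
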